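/- arXiv:2410.02100 — 6 statements merged into one kernel-verified Lean document; each statement's English description precedes it below -/
import Mathlib

section
/- Let B ∈ ℝ^{M×M} be lower triangular with unit diagonal (B_{ii} = 1 for all i, B_{ij} = 0 for i < j) and with all entries bounded in absolute value by 1 (|B_{ij}| ≤ 1 for all i, j). Then B is invertible, its inverse is lower triangular with unit diagonal, and the entries of the inverse satisfy |(B^{-1})_{ij}| ≤ 2^{i−j−1} for i > j, (B^{-1})_{ii} = 1, and (B^{-1})_{ij} = 0 for i < j. -/
open scoped BigOperators

private lemma geom_aux (j : ℕ) : ∀ n : ℕ, j < n →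
    (∑ t ∈ Finset.range n, (if t < j then (0:ℝ) else if t = j then 1 else 2 ^ (t - j - 1)))
      = 2 ^ (n - j - 1) := by
  intro n
  induction n with
  | zero => omega
  | succ n IH =>
    intro hn
    rcases Nat.lt_or_ge j n with h | h
    · rw [Finset.sum_range_succ, IH h]
      have h1 : ¬ n < j := by omega
      have h2 : ¬ n = j := by omega
      rw [if_neg h1, if_neg h2]
      have : n + 1 - j - 1 = (n - j - 1) + 1 := by omega
      rw [this, pow_succ]
      ring
    · have hj : j = n := by omega
      subst hj
      rw [Finset.sum_range_succ]
      have : ∑ t ∈ Finset.range j, (if t < j then (0:ℝ) else if t = j then 1 else 2 ^ (t - j - 1)) = 0 := by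
        apply Finset.sum_eq_zero
        intro t ht
        rw [if_pos (Finset.mem_range.mp ht)]
      rw [this]
      simp

/-- A unit lower triangular matrix with entries bounded by 1 in absolute value
is invertible; its inverse is unit lower triangular and satisfies the entrywise
bound `|(B⁻¹) i j| ≤ 2^(i−j−1)` for `i > j`. -/
theorem unit_lower_triangular_inverse_bound
    {M : ℕ} (B : Matrix (Fin M) (Fin M) ℝ)
    (hdiag : ∀ i, B i i = 1)
    (hupper : ∀ i j, i < j → B i j = 0)
    (hbound : ∀ i j, |B i j| ≤ 1) :
    IsUnit B ∧
    (∀ i, B⁻¹ i i = 1) ∧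
    (∀ i j, i < j → B⁻¹ i j = 0) ∧
    (∀ i j : Fin M, j < i → |B⁻¹ i j| ≤ 2 ^ ((i : ℕ) - (j : ℕ) - 1)) := by
  have hdet : B.det = 1 := by
    rw [Matrix.det_of_lowerTriangular B (fun i j hij => hupper i j hij)]
    simp [hdiag]
  have hUnit : IsUnit B := by
    rw [Matrix.isUnit_iff_isUnit_det, hdet]; exact isUnit_one
  have hBA : B * B⁻¹ = 1 := Matrix.mul_nonsing_inv B (by rw [hdet]; exact isUnit_one)
  -- the key recurrence
  have key : ∀ i j : Fin M,
      (∑ k ∈ Finset.univ.filter (fun k => k < i), B i k * B⁻¹ k j) + B⁻¹ i j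
        = if i = j then 1 else 0 := by
    intro i j
    have h1 : (B * B⁻¹) i j = if i = j then 1 else 0 := by
      rw [hBA]; simp [Matrix.one_apply]
    rw [Matrix.mul_apply,
      ← Finset.sum_filter_add_sum_filter_not Finset.univ (fun k => k < i)] at h1
    have h2 : ∑ k ∈ Finset.univ.filter (fun k => ¬ k < i), B i k * B⁻¹ k j = B⁻¹ i j := by
      rw [Finset.sum_eq_single i]
      · rw [hdiag, one_mul]
      · intro k hk hne
        simp only [Finset.mem_filter, Finset.mem_univ, true_and, not_lt] at hk
        rw [hupper i k (lt_of_le_of_ne hk (fun h => hne h.symm)), zero_mul]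
      · intro h; simp at h
    rw [h2] at h1
    exact h1
  -- triangularity of the inverse
  have hzero : ∀ i j : Fin M, i < j → B⁻¹ i j = 0 := by
    suffices H : ∀ n : ℕ, ∀ i j : Fin M, (i : ℕ) = n → i < j → B⁻¹ i j = 0 by
      exact fun i j h => H i i j rfl h
    intro n
    induction n using Nat.strong_induction_on with
    | _ n IH =>
      intro i j hn hij
      have hk := key i j
      have hs : ∑ k ∈ Finset.univ.filter (fun k => k < i), B i k * B⁻¹ k j = 0 := by
        apply Finset.sum_eq_zero
        intro k hk'
        simp only [Finset.mem_filter, Finset.mem_univ, true_and] at hk'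
        rw [IH (k : ℕ) (hn ▸ hk') k j rfl (hk'.trans hij), mul_zero]
      rw [hs, zero_add, if_neg (Fin.ne_of_lt hij)] at hk
      exact hk
  -- diagonal of the inverse
  have hdiag' : ∀ i : Fin M, B⁻¹ i i = 1 := by
    intro i
    have hk := key i i
    have hs : ∑ k ∈ Finset.univ.filter (fun k => k < i), B i k * B⁻¹ k i = 0 := by
      apply Finset.sum_eq_zero
      intro k hk'
      simp only [Finset.mem_filter, Finset.mem_univ, true_and] at hk'
      rw [hzero k i hk', mul_zero]
    rw [hs, zero_add, if_pos rfl] at hk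
    exact hk
  refine ⟨hUnit, hdiag', hzero, ?_⟩
  -- the entrywise bound, by strong induction on i
  suffices H : ∀ n : ℕ, ∀ i j : Fin M, (i : ℕ) = n → j < i →
      |B⁻¹ i j| ≤ 2 ^ ((i : ℕ) - (j : ℕ) - 1) by
    exact fun i j h => H i i j rfl h
  intro n
  induction n using Nat.strong_induction_on with
  | _ n IH =>
    intro i j hn hji
    have hk := key i j
    rw [if_neg (Fin.ne_of_gt hji)] at hk
    have hAij : B⁻¹ i j = -(∑ k ∈ Finset.univ.filter (fun k => k < i), B i k * B⁻¹ k j) := by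
      linarith
    set f : ℕ → ℝ := fun t =>
      if t < (j : ℕ) then 0 else if t = (j : ℕ) then 1 else 2 ^ (t - (j : ℕ) - 1) with hf
    have hterm : ∀ k : Fin M, k < i → |B i k * B⁻¹ k j| ≤ f (k : ℕ) := by
      intro k hki
      rw [abs_mul]
      rcases lt_trichotomy k j with h | h | h
      · rw [hzero k j h]
        simp [hf, h]
      · subst h
        have hfk : f (k : ℕ) = 1 := by simp [hf]
        rw [hfk, hdiag' k, abs_one, mul_one]
        exact hbound i k
      · have hb := IH (k : ℕ) (hn ▸ hki) k j rfl h
        have h1 : ¬ (k : ℕ) < (j : ℕ) := by exact_mod_cast not_lt.mpr h.le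
        have h2 : (k : ℕ) ≠ (j : ℕ) := by exact_mod_cast Fin.val_ne_of_ne (Fin.ne_of_gt h)
        simp only [hf, if_neg h1, if_neg h2]
        calc |B i k| * |B⁻¹ k j| ≤ 1 * |B⁻¹ k j| := by
              apply mul_le_mul_of_nonneg_right (hbound i k) (abs_nonneg _)
          _ = |B⁻¹ k j| := one_mul _
          _ ≤ 2 ^ ((k : ℕ) - (j : ℕ) - 1) := hb
    have hsum : |∑ k ∈ Finset.univ.filter (fun k => k < i), B i k * B⁻¹ k j|
        ≤ ∑ k ∈ Finset.univ.filter (fun k => k < i), f (k : ℕ) := by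
      refine (Finset.abs_sum_le_sum_abs _ _).trans ?_
      apply Finset.sum_le_sum
      intro k hk'
      simp only [Finset.mem_filter, Finset.mem_univ, true_and] at hk'
      exact hterm k hk'
    have hconv : ∑ k ∈ Finset.univ.filter (fun k => k < i), f (k : ℕ)
        = ∑ t ∈ Finset.range (i : ℕ), f t := by
      refine Finset.sum_nbij' (fun k => (k : ℕ))
        (fun t => if h : t < M then (⟨t, h⟩ : Fin M) else j) ?_ ?_ ?_ ?_ ?_
      · intro k hk'
        simp only [Finset.mem_filter, Finset.mem_univ, true_and] at hk'
        exact Finset.mem_range.mpr hk'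
      · intro t ht
        have ht' : t < (i : ℕ) := Finset.mem_range.mp ht
        have htM : t < M := ht'.trans i.isLt
        simp only [dif_pos htM, Finset.mem_filter, Finset.mem_univ, true_and]
        exact ht'
      · intro k hk'
        simp [k.isLt]
      · intro t ht
        have ht' : t < (i : ℕ) := Finset.mem_range.mp ht
        have htM : t < M := ht'.trans i.isLt
        simp [htM]
      · intro k hk'
        rfl
    have hgeom : ∑ t ∈ Finset.range (i : ℕ), f t = 2 ^ ((i : ℕ) - (j : ℕ) - 1) :=
      geom_aux (j : ℕ) (i : ℕ) hji
    rw [hAij, abs_neg]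
    calc |∑ k ∈ Finset.univ.filter (fun k => k < i), B i k * B⁻¹ k j|
        ≤ ∑ k ∈ Finset.univ.filter (fun k => k < i), f (k : ℕ) := hsum
      _ = 2 ^ ((i : ℕ) - (j : ℕ) - 1) := by rw [hconv, hgeom]
end

section
/- Let Ω be a nonempty topological space, and let ψ₁,…,ψ_M : Ω → ℝ and y₁,…,y_M ∈ Ω satisfy the empirical interpolation structure: ψ_m(y_m) = 1 for all m, ψ_m(y_k) = 0 for k < m, and |ψ_m(x)| ≤ 1 for all x ∈ Ω and all m (so the interpolation matrix B_M with (B_M)_{km} = ψ_m(y_k) is unit lower triangular with entries of absolute value at most 1). Then the Lebesgue constant Λ_M = sup_{x∈Ω} Σ_{j=1}^M |Σ_{m=1}^M ψ_m(x) (B_M^{-1})_{mj}| satisfies Λ_M ≤ 2^M − 1. -/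
open scoped BigOperators

private lemma geom_two_sum_real (n : ℕ) :
    ∑ i ∈ Finset.range n, (2:ℝ) ^ i = 2 ^ n - 1 := by
  rw [geom_sum_eq (by norm_num : (2:ℝ) ≠ 1)]
  norm_num

private lemma fin_Iio_pow_sum {M : ℕ} (m : Fin M) :
    ∑ k ∈ Finset.Iio m, (2:ℝ) ^ (k:ℕ) = 2 ^ (m:ℕ) - 1 := by
  have h : ∑ k ∈ Finset.Iio m, (2:ℝ) ^ (k:ℕ)
      = ∑ i ∈ Finset.range (m:ℕ), (2:ℝ) ^ i := by
    rw [← Nat.Iio_eq_range, ← Fin.map_valEmbedding_Iio, Finset.sum_map]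
    rfl
  rw [h, geom_two_sum_real]

/-- The Lebesgue constant of the empirical interpolation method satisfies
`Λ_M ≤ 2^M − 1`. -/
theorem empirical_interpolation_lebesgue_constant_bound
    {Ω : Type*} [TopologicalSpace Ω] [Nonempty Ω] {M : ℕ}
    (ψ : Fin M → Ω → ℝ) (y : Fin M → Ω)
    (hdiag : ∀ m, ψ m (y m) = 1)
    (hupper : ∀ m k : Fin M, k < m → ψ m (y k) = 0)
    (hbound : ∀ m x, |ψ m x| ≤ 1)
    (B : Matrix (Fin M) (Fin M) ℝ)
    (hB : ∀ k m, B k m = ψ m (y k)) :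
    (⨆ x, ∑ j, |∑ m, ψ m x * B⁻¹ m j|) ≤ 2 ^ M - 1 := by
  classical
  -- determinant is 1
  have hdet : B.det = 1 := by
    rw [Matrix.det_of_lowerTriangular B (by
      intro i j hij
      rw [hB]
      exact hupper j i hij)]
    simp [hB, hdiag]
  have hunit : IsUnit B.det := by rw [hdet]; exact isUnit_one
  have hmul : B * B⁻¹ = 1 := Matrix.mul_nonsing_inv B hunit
  -- recursion for the inverse entries
  have hrec : ∀ m j : Fin M, B⁻¹ m j =
      (1 : Matrix (Fin M) (Fin M) ℝ) m j - ∑ k ∈ Finset.Iio m, B m k * B⁻¹ k j := by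
    intro m j
    have h1 : ∑ k, B m k * B⁻¹ k j = (1 : Matrix (Fin M) (Fin M) ℝ) m j := by
      have := congrFun (congrFun hmul m) j
      simpa [Matrix.mul_apply] using this
    have h2 : ∑ k ∈ Finset.Iic m, B m k * B⁻¹ k j
        = (1 : Matrix (Fin M) (Fin M) ℝ) m j := by
      rw [← h1]
      refine Finset.sum_subset (Finset.subset_univ _) ?_
      intro k _ hk
      have hmk : m < k := by simpa using hk
      have : B m k = 0 := by rw [hB]; exact hupper k m hmk
      simp [this]
    have h3 : Finset.Iic m = insert m (Finset.Iio m) := by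
      ext k; simp [Finset.mem_Iic, Finset.mem_Iio, le_iff_lt_or_eq, or_comm]
    rw [h3, Finset.sum_insert (by simp)] at h2
    have hBmm : B m m = 1 := by rw [hB, hdiag]
    rw [hBmm, one_mul] at h2
    linarith
  -- basic bound on rows
  have habs : ∀ m k : Fin M, |B m k| ≤ 1 := by
    intro m k; rw [hB]; exact hbound k (y m)
  have A : ∀ m : Fin M, ∑ j, |B⁻¹ m j| ≤ 1 + ∑ k ∈ Finset.Iio m, ∑ j, |B⁻¹ k j| := by
    intro m
    have step : ∀ j : Fin M, |B⁻¹ m j| ≤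
        |(1 : Matrix (Fin M) (Fin M) ℝ) m j| + ∑ k ∈ Finset.Iio m, |B⁻¹ k j| := by
      intro j
      rw [hrec m j]
      refine le_trans (abs_sub _ _) ?_
      gcongr
      refine le_trans (Finset.abs_sum_le_sum_abs _ _) ?_
      refine Finset.sum_le_sum ?_
      intro k _
      rw [abs_mul]
      calc |B m k| * |B⁻¹ k j| ≤ 1 * |B⁻¹ k j| := by
            have := abs_nonneg (B⁻¹ k j)
            exact mul_le_mul_of_nonneg_right (habs m k) this
        _ = |B⁻¹ k j| := one_mul _
    calc ∑ j, |B⁻¹ m j|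
        ≤ ∑ j, (|(1 : Matrix (Fin M) (Fin M) ℝ) m j| + ∑ k ∈ Finset.Iio m, |B⁻¹ k j|) :=
          Finset.sum_le_sum fun j _ => step j
      _ = (∑ j, |(1 : Matrix (Fin M) (Fin M) ℝ) m j|)
            + ∑ j : Fin M, ∑ k ∈ Finset.Iio m, |B⁻¹ k j| := Finset.sum_add_distrib
      _ = 1 + ∑ k ∈ Finset.Iio m, ∑ j, |B⁻¹ k j| := by
          rw [Finset.sum_comm]
          congr 1
          simp [Matrix.one_apply, apply_ite abs]
  -- row sums bounded by 2^m
  have key : ∀ n : ℕ, ∀ m : Fin M, (m:ℕ) ≤ n → ∑ j, |B⁻¹ m j| ≤ 2 ^ (m:ℕ) := by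
    intro n
    induction n with
    | zero =>
        intro m hm
        have hIio : Finset.Iio m = ∅ := by
          ext k
          simp only [Finset.mem_Iio, Finset.notMem_empty, iff_false]
          intro hk
          have : (k:ℕ) < (m:ℕ) := hk
          omega
        have hm0 : (m:ℕ) = 0 := by omega
        have := A m
        rw [hIio] at this
        rw [hm0]
        simpa using this
    | succ n ih =>
        intro m hm
        refine le_trans (A m) ?_
        have hsum : ∑ k ∈ Finset.Iio m, ∑ j, |B⁻¹ k j|
            ≤ ∑ k ∈ Finset.Iio m, (2:ℝ) ^ (k:ℕ) := by
          refine Finset.sum_le_sum ?_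
          intro k hk
          have hkm : (k:ℕ) < (m:ℕ) := Fin.lt_def.mp (Finset.mem_Iio.mp hk)
          exact ih k (by omega)
        have := fin_Iio_pow_sum m
        linarith
  -- conclude
  refine ciSup_le fun x => ?_
  have hx : ∑ j, |∑ m, ψ m x * B⁻¹ m j| ≤ ∑ m : Fin M, ∑ j, |B⁻¹ m j| := by
    calc ∑ j, |∑ m, ψ m x * B⁻¹ m j|
        ≤ ∑ j, ∑ m, |ψ m x * B⁻¹ m j| :=
          Finset.sum_le_sum fun j _ => Finset.abs_sum_le_sum_abs _ _
      _ ≤ ∑ j, ∑ m, |B⁻¹ m j| := by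
          refine Finset.sum_le_sum fun j _ => Finset.sum_le_sum fun m _ => ?_
          rw [abs_mul]
          calc |ψ m x| * |B⁻¹ m j| ≤ 1 * |B⁻¹ m j| :=
                mul_le_mul_of_nonneg_right (hbound m x) (abs_nonneg _)
            _ = |B⁻¹ m j| := one_mul _
      _ = ∑ m : Fin M, ∑ j, |B⁻¹ m j| := Finset.sum_comm
  refine le_trans hx ?_
  calc ∑ m : Fin M, ∑ j, |B⁻¹ m j| ≤ ∑ m : Fin M, (2:ℝ) ^ (m:ℕ) :=
        Finset.sum_le_sum fun m _ => key M m (le_of_lt m.isLt)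
    _ = ∑ i ∈ Finset.range M, (2:ℝ) ^ i := Fin.sum_univ_eq_sum_range _ _
    _ = 2 ^ M - 1 := geom_two_sum_real M
end

section
/- Let Ω be a nonempty topological space, let ψ₁,…,ψ_{m−1} : Ω → ℝ be linearly independent bounded functions and y₁,…,y_{m−1} ∈ Ω points whose interpolation matrix B_{m−1} (with (B_{m−1})_{ki} = ψ_i(y_k)) is invertible, and let I_{m−1} denote the corresponding interpolation operator. If a bounded function φ : Ω → ℝ has residual r = φ − I_{m−1}[φ] with ‖r‖_{L^∞(Ω)} > 0, then φ ∉ span{ψ₁,…,ψ_{m−1}}; moreover, for any point y_m ∈ Ω with r(y_m) ≠ 0, the normalized residual ψ_m = r / r(y_m) makes {ψ₁,…,ψ_{m−1}, ψ_m} linearly independent, so span{ψ₁,…,ψ_m} has dimension m. -/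
open scoped BigOperators

/-- If the residual `r = φ − I_{m-1}[φ]` of a bounded function `φ` has positive
sup norm, then `φ` is not in the span of the current basis; moreover, snoc-ing
the normalized residual `r / r(y_m)` (for any point where `r` does not vanish)
yields a linearly independent family whose span has dimension `m`. -/
theorem empirical_interpolation_residual_extends_basis
    {Ω : Type*} [TopologicalSpace Ω] [Nonempty Ω] {M : ℕ}
    (ψ : Fin M → Ω → ℝ) (y : Fin M → Ω)
    (hli : LinearIndependent ℝ ψ)
    (hψbdd : ∀ m, BddAbove (Set.range fun x => |ψ m x|))
    (B : Matrix (Fin M) (Fin M) ℝ)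
    (hB : ∀ k i, B k i = ψ i (y k))
    (hBinv : IsUnit B)
    (φ : Ω → ℝ) (hφbdd : BddAbove (Set.range fun x => |φ x|))
    (a : Fin M → ℝ) (ha : B.mulVec a = fun k => φ (y k))
    (r : Ω → ℝ) (hr : r = fun x => φ x - ∑ i, a i * ψ i x)
    (hrpos : 0 < ⨆ x, |r x|) :
    φ ∉ Submodule.span ℝ (Set.range ψ) ∧
    ∀ ym : Ω, r ym ≠ 0 →
      LinearIndependent ℝ (Fin.snoc ψ (fun x => r x / r ym) : Fin (M + 1) → Ω → ℝ) ∧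
      Module.finrank ℝ
        (Submodule.span ℝ
          (Set.range (Fin.snoc ψ (fun x => r x / r ym) : Fin (M + 1) → Ω → ℝ))) = M + 1 := by
  -- key injectivity fact
  have hinj : ∀ c : Fin M → ℝ, (∀ k, ∑ i, c i * ψ i (y k) = 0) → c = 0 := by
    intro c hc
    obtain ⟨u, hu⟩ := hBinv
    have hBc : B.mulVec c = 0 := by
      funext k
      simp only [Matrix.mulVec, dotProduct, hB, Pi.zero_apply]
      rw [← hc k]
      exact Finset.sum_congr rfl fun i _ => mul_comm _ _
    have : ((↑u⁻¹ : Matrix (Fin M) (Fin M) ℝ) * B).mulVec c = 0 := by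
      rw [← Matrix.mulVec_mulVec, hBc, Matrix.mulVec_zero]
    rwa [← hu, Units.inv_mul, Matrix.one_mulVec] at this
  -- r vanishes at the interpolation points
  have hryk : ∀ k, r (y k) = 0 := by
    intro k
    have := congrFun ha k
    simp only [Matrix.mulVec, dotProduct, hB] at this
    rw [hr]
    simp only
    rw [sub_eq_zero, ← this]
    exact Finset.sum_congr rfl fun i _ => mul_comm _ _
  -- there is a point where r is nonzero
  have hrne : ∃ x, r x ≠ 0 := by
    by_contra h
    push_neg at h
    have : (⨆ x, |r x|) = 0 := by
      have : (fun x => |r x|) = fun _ => (0 : ℝ) := by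
        funext x; rw [h x, abs_zero]
      rw [this, ciSup_const]
    linarith
  have hnotin : φ ∉ Submodule.span ℝ (Set.range ψ) := by
    intro hmem
    obtain ⟨c, hc⟩ := (Submodule.mem_span_range_iff_exists_fun ℝ).mp hmem
    have hca : c - a = 0 := by
      apply hinj
      intro k
      have h1 : φ (y k) = ∑ i, c i * ψ i (y k) := by
        rw [← hc]; simp [Finset.sum_apply]
      have h2 : φ (y k) = ∑ i, a i * ψ i (y k) := by
        have := hryk k
        rw [hr] at this
        simpa [sub_eq_zero] using this
      simp only [Pi.sub_apply, sub_mul, Finset.sum_sub_distrib]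
      rw [← h1, ← h2]; ring
    have hca' : c = a := by rwa [sub_eq_zero] at hca
    obtain ⟨x, hx⟩ := hrne
    apply hx
    rw [hr]
    simp only
    rw [sub_eq_zero, ← hc, hca']
    simp [Finset.sum_apply]
  refine ⟨hnotin, ?_⟩
  intro ym hym
  have hpsi_mem : (fun x => r x / r ym) ∉ Submodule.span ℝ (Set.range ψ) := by
    intro hmem
    obtain ⟨c, hc⟩ := (Submodule.mem_span_range_iff_exists_fun ℝ).mp hmem
    have hc0 : c = 0 := by
      apply hinj
      intro k
      have := congrFun hc (y k)
      simp only [Finset.sum_apply, Pi.smul_apply, smul_eq_mul] at this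
      rw [this, hryk k, zero_div]
    have := congrFun hc ym
    rw [hc0] at this
    simp only [Pi.zero_apply, zero_smul, Finset.sum_apply, Finset.sum_const_zero] at this
    rw [div_self hym] at this
    exact one_ne_zero this.symm
  have hsnoc : LinearIndependent ℝ (Fin.snoc ψ (fun x => r x / r ym) : Fin (M + 1) → Ω → ℝ) :=
    (linearIndependent_fin_snoc).mpr ⟨hli, hpsi_mem⟩
  refine ⟨hsnoc, ?_⟩
  rw [finrank_span_eq_card hsnoc]
  simp
end

section
/- Let Ω be a nonempty topological space and let ψ₁,…,ψ_{M+1} : Ω → ℝ and y₁,…,y_{M+1} ∈ Ω satisfy the empirical interpolation structure: ψ_m(y_m) = 1, ψ_m(y_k) = 0 for k < m, and |ψ_m(x)| ≤ 1 for all x ∈ Ω. Let w : Ω → ℝ with w ∈ span{ψ₁,…,ψ_{M+1}}, and let w_M = I_M[w] be its interpolant using the first M functions and points (the matrix B_M with (B_M)_{km} = ψ_m(y_k) is unit lower triangular, hence invertible). Then the interpolation error satisfies ‖w − w_M‖_{L^∞(Ω)} ≤ |w(y_{M+1}) − w_M(y_{M+1})|. -/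
open scoped BigOperators

/-- If `w` lies in the span of `ψ₁,…,ψ_{M+1}` (with empirical interpolation
structure), then the sup-norm error of its interpolant `w_M` using the first
`M` functions and points is bounded by the pointwise error at `y_{M+1}`. -/
theorem empirical_interpolation_next_point_error_bound
    {Ω : Type*} [TopologicalSpace Ω] [Nonempty Ω] {M : ℕ}
    (ψ : Fin (M + 1) → Ω → ℝ) (y : Fin (M + 1) → Ω)
    (hdiag : ∀ m, ψ m (y m) = 1)
    (hupper : ∀ m k, k < m → ψ m (y k) = 0)
    (hbound : ∀ m x, |ψ m x| ≤ 1)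
    (w : Ω → ℝ) (hw : w ∈ Submodule.span ℝ (Set.range ψ))
    (a : Fin M → ℝ)
    (ha : ∀ k : Fin M,
      ∑ m : Fin M, ψ m.castSucc (y k.castSucc) * a m = w (y k.castSucc))
    (wM : Ω → ℝ) (hwM : wM = fun x => ∑ m : Fin M, a m * ψ m.castSucc x) :
    (⨆ x, |w x - wM x|) ≤ |w (y (Fin.last M)) - wM (y (Fin.last M))| := by
  obtain ⟨c, hc⟩ := (Submodule.mem_span_range_iff_exists_fun ℝ).mp hw
  set b : Fin (M+1) → ℝ := fun m => c m - (if h : (m:ℕ) < M then a ⟨m, h⟩ else 0) with hb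
  have he : ∀ x, w x - wM x = ∑ m : Fin (M+1), b m * ψ m x := by
    intro x
    have hcx : ∑ m : Fin (M+1), c m * ψ m x = w x := by
      have := congrFun hc x; simpa using this
    have hwMx : wM x = ∑ m : Fin (M+1), (if h : (m:ℕ) < M then a ⟨m, h⟩ else 0) * ψ m x := by
      rw [hwM, Fin.sum_univ_castSucc]
      simp [Fin.is_lt]
    rw [← hcx, hwMx, ← Finset.sum_sub_distrib]
    refine Finset.sum_congr rfl fun m _ => ?_
    rw [hb]; ring
  -- interpolation conditions: error vanishes at first M points
  have hzero : ∀ k : Fin M, w (y k.castSucc) - wM (y k.castSucc) = 0 := by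
    intro k
    rw [hwM, ← ha k]
    simp [mul_comm]
  -- coefficients b vanish for indices < M
  have hbz : ∀ n : ℕ, ∀ hn : n < M, b ⟨n, hn.trans (Nat.lt_succ_self M)⟩ = 0 := by
    intro n
    induction n using Nat.strong_induction_on with
    | _ n ih =>
      intro hn
      set k : Fin (M+1) := ⟨n, hn.trans (Nat.lt_succ_self M)⟩ with hk
      have hek : w (y k) - wM (y k) = 0 := by
        have := hzero ⟨n, hn⟩
        simpa [hk, Fin.castSucc_mk] using this
      have hsum : ∑ m : Fin (M+1), b m * ψ m (y k) = b k := by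
        rw [Finset.sum_eq_single k]
        · rw [hdiag, mul_one]
        · intro m _ hm
          rcases lt_or_gt_of_ne (fun h : (m:ℕ) = (k:ℕ) => hm (Fin.ext h)) with h | h
          · have : b m = 0 := by
              have := ih m (by simpa [hk] using h) (lt_trans (by simpa [hk] using h) hn)
              simpa using this
            rw [this, zero_mul]
          · rw [hupper m k (by exact h), mul_zero]
        · intro h; exact absurd (Finset.mem_univ k) h
      rw [he (y k), hsum] at hek
      exact hek
  have hblast : b (Fin.last M) = w (y (Fin.last M)) - wM (y (Fin.last M)) := by
    rw [he (y (Fin.last M)), Finset.sum_eq_single (Fin.last M)]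
    · rw [hdiag, mul_one]
    · intro m _ hm
      have hmlt : (m:ℕ) < M := by
        have := Fin.lt_last_iff_ne_last.mpr hm
        simpa [Fin.lt_def] using this
      have : b m = 0 := by simpa using hbz m hmlt
      rw [this, zero_mul]
    · intro h; exact absurd (Finset.mem_univ (Fin.last M)) h
  have hpt : ∀ x, |w x - wM x| ≤ |w (y (Fin.last M)) - wM (y (Fin.last M))| := by
    intro x
    have hex : w x - wM x = b (Fin.last M) * ψ (Fin.last M) x := by
      rw [he x, Finset.sum_eq_single (Fin.last M)]
      · intro m _ hm
        have hmlt : (m:ℕ) < M := by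
          have := Fin.lt_last_iff_ne_last.mpr hm
          simpa [Fin.lt_def] using this
        have : b m = 0 := by simpa using hbz m hmlt
        rw [this, zero_mul]
      · intro h; exact absurd (Finset.mem_univ (Fin.last M)) h
    rw [hex, ← hblast, abs_mul]
    calc |b (Fin.last M)| * |ψ (Fin.last M) x| ≤ |b (Fin.last M)| * 1 :=
          mul_le_mul_of_nonneg_left (hbound _ _) (abs_nonneg _)
      _ = |b (Fin.last M)| := mul_one _
  exact ciSup_le hpt
end

section
/- Let Ω be a nonempty topological space, let P ≥ 1, and let ψ₁,…,ψ_{M+P} : Ω → ℝ and y₁,…,y_{M+P} ∈ Ω satisfy the empirical interpolation structure: ψ_m(y_m) = 1, ψ_m(y_k) = 0 for k < m, and |ψ_m(x)| ≤ 1 for all x ∈ Ω. Let w : Ω → ℝ with w ∈ span{ψ₁,…,ψ_{M+P}}, and let w_M = I_M[w] be its interpolant using the first M functions and points. Let e₁,…,e_P ∈ ℝ be the unique solution of the linear system Σ_{j=1}^P ψ_{M+j}(y_{M+i}) e_j = w(y_{M+i}) − w_M(y_{M+i}) for i = 1,…,P. Then the interpolation error satisfies ‖w − w_M‖_{L^∞(Ω)}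 ≤ Σ_{j=1}^P |e_j|. -/
open scoped BigOperators

/-- High-order error estimate: if `w` lies in the span of `ψ₁,…,ψ_{M+P}` (with
empirical interpolation structure), then the sup-norm error of its interpolant
using the first `M` functions and points is bounded by `Σ_{j=1}^P |e_j|`, where
the `e_j` solve the triangular system at the next `P` points. -/
theorem empirical_interpolation_high_order_error_estimate
    {Ω : Type*} [TopologicalSpace Ω] [Nonempty Ω] {M P : ℕ} (hP : 1 ≤ P)
    (ψ : Fin (M + P) → Ω → ℝ) (y : Fin (M + P) → Ω)
    (hdiag : ∀ m, ψ m (y m) = 1)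
    (hupper : ∀ m k, k < m → ψ m (y k) = 0)
    (hbound : ∀ m x, |ψ m x| ≤ 1)
    (w : Ω → ℝ) (hw : w ∈ Submodule.span ℝ (Set.range ψ))
    (a : Fin M → ℝ)
    (ha : ∀ k : Fin M,
      ∑ m : Fin M, ψ (Fin.castAdd P m) (y (Fin.castAdd P k)) * a m
        = w (y (Fin.castAdd P k)))
    (wM : Ω → ℝ) (hwM : wM = fun x => ∑ m : Fin M, a m * ψ (Fin.castAdd P m) x)
    (e : Fin P → ℝ)
    (he : ∀ i : Fin P,
      ∑ j : Fin P, ψ (Fin.natAdd M j) (y (Fin.natAdd M i)) * e j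
        = w (y (Fin.natAdd M i)) - wM (y (Fin.natAdd M i))) :
    (⨆ x, |w x - wM x|) ≤ ∑ j, |e j| := by
  -- obtain coefficients of w
  obtain ⟨c, hc⟩ := (Submodule.mem_span_range_iff_exists_fun ℝ).mp hw
  have hcx : ∀ x, w x = ∑ m, c m * ψ m x := by
    intro x
    rw [← hc]
    simp [Finset.sum_apply]
  -- combined coefficients of the residual
  set d : Fin (M + P) → ℝ :=
    fun m => Fin.addCases (fun k => c (Fin.castAdd P k) - a k)
      (fun j => c (Fin.natAdd M j)) m with hd
  have hdc : ∀ k : Fin M, d (Fin.castAdd P k) = c (Fin.castAdd P k) - a k := by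
    intro k; simp [hd]
  have hdn : ∀ j : Fin P, d (Fin.natAdd M j) = c (Fin.natAdd M j) := by
    intro j; simp [hd]
  have hr : ∀ x, w x - wM x = ∑ m, d m * ψ m x := by
    intro x
    rw [hcx x, hwM]
    rw [Fin.sum_univ_add (f := fun m => c m * ψ m x),
      Fin.sum_univ_add (f := fun m => d m * ψ m x)]
    simp only [hdc, hdn, sub_mul, Finset.sum_sub_distrib]
    ring
  -- residual vanishes at first M points
  have hr0 : ∀ k : Fin M, ∑ m, d m * ψ m (y (Fin.castAdd P k)) = 0 := by
    intro k
    rw [← hr]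
    rw [← ha k, hwM]
    simp [mul_comm]
  -- first M coefficients of residual vanish
  have key : ∀ n : ℕ, ∀ k : Fin M, (k : ℕ) = n → d (Fin.castAdd P k) = 0 := by
    intro n
    induction n using Nat.strong_induction_on with
    | _ n ih =>
      intro k hk
      have hz := hr0 k
      rw [Finset.sum_eq_single (Fin.castAdd P k)] at hz
      · rwa [hdiag, mul_one] at hz
      · intro m _ hm
        rcases lt_trichotomy ((m : ℕ)) ((Fin.castAdd P k : ℕ)) with h | h | h
        · have hmM : (m : ℕ) < M := lt_of_lt_of_le h (by simp [Fin.le_def, k.isLt.le])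
          have hmM' : (m : ℕ) < M := by simpa using hmM
          have hmeq : m = Fin.castAdd P ⟨(m : ℕ), hmM'⟩ := by
            apply Fin.ext; simp
          rw [hmeq, ih ((m : ℕ)) (by simpa [hk] using h) ⟨(m : ℕ), hmM'⟩ rfl, zero_mul]
        · exact absurd (Fin.ext h.symm) (Ne.symm hm)
        · rw [hupper m (Fin.castAdd P k) (by exact h), mul_zero]
      · simp
  have hd0 : ∀ k : Fin M, d (Fin.castAdd P k) = 0 := fun k => key k k rfl
  -- the residual equals ∑ d_{M+j} ψ_{M+j}
  have hr2 : ∀ x, w x - wM x = ∑ j : Fin P, d (Fin.natAdd M j) * ψ (Fin.natAdd M j) x := by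
    intro x
    rw [hr x, Fin.sum_univ_add (f := fun m => d m * ψ m x)]
    simp [hd0]
  -- e j = d (natAdd M j)
  have key2 : ∀ n : ℕ, ∀ i : Fin P, (i : ℕ) = n → e i = d (Fin.natAdd M i) := by
    intro n
    induction n using Nat.strong_induction_on with
    | _ n ih =>
      intro i hi
      have hz : ∑ j : Fin P,
          ψ (Fin.natAdd M j) (y (Fin.natAdd M i)) * (e j - d (Fin.natAdd M j)) = 0 := by
        simp only [mul_sub, Finset.sum_sub_distrib]
        rw [he i, hr2]
        rw [Finset.sum_congr rfl
          (fun j _ => mul_comm (ψ (Fin.natAdd M j) (y (Fin.natAdd M i))) (d (Fin.natAdd M j)))]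
        ring
      rw [Finset.sum_eq_single i] at hz
      · rw [hdiag, one_mul, sub_eq_zero] at hz
        exact hz
      · intro j _ hj
        rcases lt_trichotomy ((j : ℕ)) ((i : ℕ)) with h | h | h
        · rw [ih ((j : ℕ)) (by omega) j rfl, sub_self, mul_zero]
        · exact absurd (Fin.ext h) hj
        · rw [hupper (Fin.natAdd M j) (Fin.natAdd M i) (by simp [Fin.lt_def, h]), zero_mul]
      · simp
  have he2 : ∀ j : Fin P, e j = d (Fin.natAdd M j) := fun j => key2 j j rfl
  -- final bound
  apply ciSup_le
  intro x
  rw [hr2 x]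
  calc |∑ j : Fin P, d (Fin.natAdd M j) * ψ (Fin.natAdd M j) x|
      ≤ ∑ j : Fin P, |d (Fin.natAdd M j) * ψ (Fin.natAdd M j) x| :=
        Finset.abs_sum_le_sum_abs _ _
    _ ≤ ∑ j, |e j| := by
        apply Finset.sum_le_sum
        intro j _
        rw [abs_mul, ← he2 j]
        calc |e j| * |ψ (Fin.natAdd M j) x| ≤ |e j| * 1 :=
          mul_le_mul_of_nonneg_left (hbound _ _) (abs_nonneg _)
        _ = |e j| := mul_one _
end

section
/- Let Ω be a nonempty topological space, let P ≥ 1, and let ψ₁,…,ψ_{M+P} : Ω → ℝ and y₁,…,y_{M+P} ∈ Ω satisfy ψ_m(y_m) = 1 and ψ_m(y_k) = 0 for k < m (so the full interpolation matrix is unit lower triangular). Let w ∈ span{ψ₁,…,ψ_{M+P}} and let w_M = I_M[w] be its interpolant using the first M functions and points. Then the error admits the exact representation w − w_M = Σ_{j=1}^P e_j ψ_{M+j}, where e₁,…,e_P solve Σ_{j=1}^P ψ_{M+j}(y_{M+i}) e_j = w(y_{M+i}) − w_M(y_{M+i}) for i = 1,…,P; in particular, in the expansion w − w_M = Σ_{m=1}^{M+P}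 κ_m ψ_m the first M coefficients vanish: κ_m = 0 for 1 ≤ m ≤ M. -/
/-!
The matrix `(ψ_m(y_k))` is unit triangular, so an expansion `Σ κ_m ψ_m` is pinned down, coefficient
by coefficient in increasing order, by its values at `y_1, y_2, …`. The error `w - w_M` lies in the
span of the `ψ_m` and vanishes at `y_1,…,y_M`, so the first `M` coefficients of any expansion of it
vanish; the remaining `P` coefficients then solve the triangular system defining the `e_j`, and by
the same uniqueness they are the `e_j`.
-/

section Unitriangular

variable {ι R : Type*} [LinearOrder ι] [Fintype ι] {B : ι → ι → R}

theorem unitriangular_eq_zero_of_sum_eq_zero [Semiring R]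
    (hdiag : ∀ m, B m m = 1) (hupper : ∀ m k, k < m → B m k = 0) {d : ι → R} (m : ι)
    (hsum : ∀ k ≤ m, ∑ j, B j k * d j = 0) : d m = 0 := by
  induction m using WellFoundedLT.induction with
  | _ m ih =>
    have hsingle : ∑ j, B j m * d j = d m := by
      rw [Finset.sum_eq_single m, hdiag, one_mul]
      · intro j _ hjm
        rcases hjm.lt_or_gt with hlt | hgt
        · rw [ih j hlt fun k hk => hsum k (hk.trans hlt.le), mul_zero]
        · rw [hupper j m hgt, zero_mul]
      · simp
    rw [← hsingle, hsum m le_rfl]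

theorem unitriangular_eq_of_sum_eq [Ring R]
    (hdiag : ∀ m, B m m = 1) (hupper : ∀ m k, k < m → B m k = 0) {d d' : ι → R}
    (hsum : ∀ k, ∑ j, B j k * d j = ∑ j, B j k * d' j) (m : ι) : d m = d' m := by
  refine sub_eq_zero.mp (unitriangular_eq_zero_of_sum_eq_zero hdiag hupper (d := d - d') m
    fun k _ => ?_)
  simp only [Pi.sub_apply, mul_sub, Finset.sum_sub_distrib, hsum k, sub_self]

end Unitriangular

section Expansion

variable {Ω : Type*}

theorem fun_sum_mul_mem_span {ι ι' : Type*} {ψ : ι → Ω → ℝ} [Fintype ι'] (c : ι' → ℝ)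
    (f : ι' → ι) : (fun x => ∑ m, c m * ψ (f m) x) ∈ Submodule.span ℝ (Set.range ψ) := by
  have hsum : (fun x => ∑ m, c m * ψ (f m) x) = ∑ m, c m • ψ (f m) := by
    ext x
    simp [Finset.sum_apply]
  rw [hsum]
  exact Submodule.sum_mem _ fun m _ =>
    Submodule.smul_mem _ (c m) (Submodule.subset_span (Set.mem_range_self (f m)))

theorem exists_fun_sum_mul_eq_of_mem_span {ι : Type*} [Fintype ι] {ψ : ι → Ω → ℝ} {v : Ω → ℝ}
    (hv : v ∈ Submodule.span ℝ (Set.range ψ)) :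
    ∃ κ : ι → ℝ, v = fun x => ∑ m, κ m * ψ m x := by
  obtain ⟨κ, hκ⟩ := (Submodule.mem_span_range_iff_exists_fun ℝ).mp hv
  exact ⟨κ, funext fun x => by simp [← hκ, Finset.sum_apply]⟩

theorem sum_eq_sum_natAdd_of_forall_castAdd_eq_zero {M P : ℕ} {ψ : Fin (M + P) → Ω → ℝ}
    {κ : Fin (M + P) → ℝ} (hκ : ∀ i : Fin M, κ (Fin.castAdd P i) = 0) (x : Ω) :
    ∑ m, κ m * ψ m x = ∑ j : Fin P, κ (Fin.natAdd M j) * ψ (Fin.natAdd M j) x := by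
  simp [Fin.sum_univ_add, hκ]

end Expansion

theorem empirical_interpolation_exact_error_representation_general
    {Ω : Type*} {M P : ℕ}
    (ψ : Fin (M + P) → Ω → ℝ) (y : Fin (M + P) → Ω)
    (hdiag : ∀ m, ψ m (y m) = 1)
    (hupper : ∀ m k, k < m → ψ m (y k) = 0)
    (w : Ω → ℝ) (hw : w ∈ Submodule.span ℝ (Set.range ψ))
    (a : Fin M → ℝ)
    (ha : ∀ k : Fin M,
      ∑ m : Fin M, ψ (Fin.castAdd P m) (y (Fin.castAdd P k)) * a m
        = w (y (Fin.castAdd P k)))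
    (wM : Ω → ℝ) (hwM : wM = fun x => ∑ m : Fin M, a m * ψ (Fin.castAdd P m) x)
    (e : Fin P → ℝ)
    (he : ∀ i : Fin P,
      ∑ j : Fin P, ψ (Fin.natAdd M j) (y (Fin.natAdd M i)) * e j
        = w (y (Fin.natAdd M i)) - wM (y (Fin.natAdd M i))) :
    ((fun x => w x - wM x) = fun x => ∑ j : Fin P, e j * ψ (Fin.natAdd M j) x) ∧
    (∀ κ : Fin (M + P) → ℝ,
      ((fun x => w x - wM x) = fun x => ∑ m, κ m * ψ m x) →
      ∀ m : Fin (M + P), (m : ℕ) < M → κ m = 0) := by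
  have herror_head (k : Fin M) : w (y (Fin.castAdd P k)) - wM (y (Fin.castAdd P k)) = 0 := by
    simp only [hwM, ← ha k, mul_comm, sub_self]
  have hhead : ∀ κ : Fin (M + P) → ℝ, ((fun x => w x - wM x) = fun x => ∑ m, κ m * ψ m x) →
      ∀ m : Fin (M + P), (m : ℕ) < M → κ m = 0 := by
    intro κ hκ m hm
    refine unitriangular_eq_zero_of_sum_eq_zero (B := fun m k => ψ m (y k)) hdiag hupper m
      fun k hk => ?_
    have hkM : (k : ℕ) < M := lt_of_le_of_lt (Fin.le_def.mp hk) hm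
    simpa [mul_comm] using (congrFun hκ (y k)).symm.trans (herror_head ⟨k, hkM⟩)
  obtain ⟨κ, hκ⟩ := exists_fun_sum_mul_eq_of_mem_span
    (Submodule.sub_mem _ hw (hwM ▸ fun_sum_mul_mem_span a (Fin.castAdd P)))
  have htail := hκ.trans <| funext <| sum_eq_sum_natAdd_of_forall_castAdd_eq_zero
    fun i => hhead κ hκ _ i.isLt
  have he_eq : ∀ j, e j = κ (Fin.natAdd M j) :=
    unitriangular_eq_of_sum_eq (B := fun j i => ψ (Fin.natAdd M j) (y (Fin.natAdd M i)))
      (fun _ => hdiag _) (fun _ _ hlt => hupper _ _ ((Fin.natAdd_lt_natAdd_iff M).mpr hlt))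
      fun i => by simpa [mul_comm] using (he i).trans (congrFun htail _)
  exact ⟨htail.trans (by simp only [he_eq]), hhead⟩

/-- Exact error representation: if `w` lies in the span of `ψ₁,…,ψ_{M+P}` (the
full interpolation matrix being unit lower triangular), then
`w − w_M = Σ_{j=1}^P e_j ψ_{M+j}` where the `e_j` solve the triangular system at
the next `P` points; in particular, in any expansion `w − w_M = Σ κ_m ψ_m` the
first `M` coefficients vanish. -/
theorem empirical_interpolation_exact_error_representation
    {Ω : Type*} [TopologicalSpace Ω] [Nonempty Ω] {M P : ℕ} (hP : 1 ≤ P)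
    (ψ : Fin (M + P) → Ω → ℝ) (y : Fin (M + P) → Ω)
    (hdiag : ∀ m, ψ m (y m) = 1)
    (hupper : ∀ m k, k < m → ψ m (y k) = 0)
    (w : Ω → ℝ) (hw : w ∈ Submodule.span ℝ (Set.range ψ))
    (a : Fin M → ℝ)
    (ha : ∀ k : Fin M,
      ∑ m : Fin M, ψ (Fin.castAdd P m) (y (Fin.castAdd P k)) * a m
        = w (y (Fin.castAdd P k)))
    (wM : Ω → ℝ) (hwM : wM = fun x => ∑ m : Fin M, a m * ψ (Fin.castAdd P m) x)
    (e : Fin P → ℝ)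
    (he : ∀ i : Fin P,
      ∑ j : Fin P, ψ (Fin.natAdd M j) (y (Fin.natAdd M i)) * e j
        = w (y (Fin.natAdd M i)) - wM (y (Fin.natAdd M i))) :
    ((fun x => w x - wM x) = fun x => ∑ j : Fin P, e j * ψ (Fin.natAdd M j) x) ∧
    (∀ κ : Fin (M + P) → ℝ,
      ((fun x => w x - wM x) = fun x => ∑ m, κ m * ψ m x) →
      ∀ m : Fin (M + P), (m : ℕ) < M → κ m = 0) :=
  empirical_interpolation_exact_error_representation_general ψ y hdiag hupper w hw a ha wM hwM e he
end
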